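/- Let G be a finite connected weighted graph with more than one vertex and Ψ a functional given by ψ ∈ ℓ²(G) with Ψ(χ_G) ≠ 0. Then for every f ∈ ℓ²(G) and every ε > 0: ‖f‖² ≤ (1+ε)(θ/λ₁)‖∇f‖² + ((1+ε)/ε)(|G|²/|Ψ(χ_G)|²)|Ψ(f)|², where θ = |G|‖ψ‖²/|Ψ(χ_G)|². -/

import Mathlib

open Finset

noncomputable def lap {V : Type*} [Fintype V] (w : V → V → ℝ) (f : V → ℂ) : V → ℂ :=
  fun v => ∑ u, (f v - f u) * (w v u : ℂ)

noncomputable def gip {V : Type*} [Fintype V] (f g : V → ℂ) : ℂ :=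
  ∑ v, f v * (starRingEnd ℂ) (g v)

noncomputable def gradSq {V : Type*} [Fintype V] (w : V → V → ℝ) (f : V → ℂ) : ℝ :=
  (1 / 2) * ∑ u, ∑ v, ‖f u - f v‖ ^ 2 * w u v

noncomputable def normSq {V : Type*} [Fintype V] (f : V → ℂ) : ℝ := ∑ v, ‖f v‖ ^ 2

/-- `μ` is an eigenvalue of the weighted graph Laplacian. -/
def IsEigen {V : Type*} [Fintype V] (w : V → V → ℝ) (μ : ℝ) : Prop :=
  ∃ g : V → ℂ, g ≠ 0 ∧ lap w g = fun v => (μ : ℂ) * g v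

/-!
Write `f = g + c • χ` with `g ⟂ χ`, where the constants `χ` span the kernel of the Laplacian `Δ`
because the graph is connected. Expanding `g` in an eigenbasis of the symmetric operator `Δ` gives
`λ₁ ‖g‖² ≤ ⟪g, Δ g⟫ = ‖∇f‖²`. Since `Ψ(f) = Ψ(g) + c Ψ(χ)`, and `Ψ(g)` only sees the component
of `ψ` orthogonal to `χ`, whose squared norm is `‖ψ‖² - |Ψ(χ)|² / ‖χ‖²`, Cauchy–Schwarz and
Young's inequality with weight `ε` bound `|c|² ‖χ‖²` by `|Ψ(f)|²` and `‖g‖²`.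
-/

open Finset Module.End
open scoped InnerProductSpace

section InnerProductSpace

variable {𝕜 E : Type*} [RCLike 𝕜] [NormedAddCommGroup E] [InnerProductSpace 𝕜 E]

theorem LinearMap.IsSymmetric.mul_norm_sq_le_re_inner_map_self [FiniteDimensional 𝕜 E]
    {T : E →ₗ[𝕜] E} (hT : T.IsSymmetric) {lam : ℝ}
    (hlam : ∀ μ : ℝ, μ ≠ 0 → HasEigenvalue T μ → lam ≤ μ)
    {x : E} (hx : ∀ y ∈ LinearMap.ker T, ⟪y, x⟫_𝕜 = 0) :
    lam * ‖x‖ ^ 2 ≤ RCLike.re ⟪x, T x⟫_𝕜 := by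
  set b := hT.eigenvectorBasis rfl
  set μ := hT.eigenvalues rfl
  have hre : RCLike.re ⟪x, T x⟫_𝕜 = ∑ i, μ i * ‖⟪b i, x⟫_𝕜‖ ^ 2 := by
    rw [← b.sum_inner_mul_inner x (T x), map_sum]
    refine sum_congr rfl fun i _ => ?_
    rw [← hT, hT.apply_eigenvectorBasis, inner_smul_left, RCLike.conj_ofReal,
      ← inner_conj_symm x, mul_left_comm, RCLike.conj_mul, ← RCLike.ofReal_pow,
      ← RCLike.ofReal_mul, RCLike.ofReal_re]
  have hterm : ∀ i, lam * ‖⟪b i, x⟫_𝕜‖ ^ 2 ≤ μ i * ‖⟪b i, x⟫_𝕜‖ ^ 2 := by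
    intro i
    by_cases hμ : μ i = 0
    · have hker : b i ∈ LinearMap.ker T := by
        simp [b, μ, hT.apply_eigenvectorBasis, hμ]
      simp [hx _ hker]
    · exact mul_le_mul_of_nonneg_right (hlam _ hμ (hT.hasEigenvalue_eigenvalues rfl i))
        (sq_nonneg _)
  calc lam * ‖x‖ ^ 2 = ∑ i, lam * ‖⟪b i, x⟫_𝕜‖ ^ 2 := by
        rw [← mul_sum, b.sum_sq_norm_inner_right]
    _ ≤ ∑ i, μ i * ‖⟪b i, x⟫_𝕜‖ ^ 2 := sum_le_sum fun i _ => hterm i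
    _ = RCLike.re ⟪x, T x⟫_𝕜 := hre.symm

theorem Module.End.HasEigenvector.nonneg {T : E →ₗ[𝕜] E} (hT : ∀ x, 0 ≤ RCLike.re ⟪x, T x⟫_𝕜)
    {μ : ℝ} {x : E} (hx : HasEigenvector T μ x) : 0 ≤ μ := by
  have hquad : RCLike.re ⟪x, T x⟫_𝕜 = μ * ‖x‖ ^ 2 := by
    rw [mem_eigenspace_iff.mp hx.1, inner_smul_right, inner_self_eq_norm_sq_to_K,
      ← RCLike.ofReal_pow, ← RCLike.ofReal_mul, RCLike.ofReal_re]
  have hpos : 0 < ‖x‖ ^ 2 := by positivity [hx.2]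
  exact nonneg_of_mul_nonneg_left (hquad ▸ hT x) hpos

theorem norm_inner_sq_le_of_inner_eq_zero {χ g : E} (hχ : χ ≠ 0) (hg : ⟪χ, g⟫_𝕜 = 0) (ψ : E) :
    ‖⟪ψ, g⟫_𝕜‖ ^ 2 ≤ (‖ψ‖ ^ 2 - ‖⟪ψ, χ⟫_𝕜‖ ^ 2 / ‖χ‖ ^ 2) * ‖g‖ ^ 2 := by
  have hχχ : ⟪χ, χ⟫_𝕜 ≠ 0 := inner_self_ne_zero.mpr hχ
  set p : E := (⟪χ, ψ⟫_𝕜 / ⟪χ, χ⟫_𝕜) • χ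
  have hpg : ⟪p, g⟫_𝕜 = 0 := by simp [p, inner_smul_left, hg]
  have hp : ⟪p, ψ - p⟫_𝕜 = 0 := by
    simp only [p, inner_smul_left, inner_sub_right, inner_smul_right]
    field_simp
    ring
  have hpnorm : ‖p‖ ^ 2 = ‖⟪ψ, χ⟫_𝕜‖ ^ 2 / ‖χ‖ ^ 2 := by
    rw [norm_smul, norm_div, inner_self_eq_norm_sq_to_K, ← inner_conj_symm, RCLike.norm_conj]
    have hχnorm : ‖χ‖ ≠ 0 := norm_ne_zero_iff.mpr hχ
    simp only [norm_pow, norm_algebraMap', norm_norm]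
    field_simp
  have hpyth : ‖ψ‖ ^ 2 = ‖p‖ ^ 2 + ‖ψ - p‖ ^ 2 := by
    simpa only [sq, add_sub_cancel] using
      norm_add_sq_eq_norm_sq_add_norm_sq_of_inner_eq_zero p (ψ - p) hp
  have hinner : ⟪ψ, g⟫_𝕜 = ⟪ψ - p, g⟫_𝕜 := by rw [inner_sub_left, hpg, sub_zero]
  calc ‖⟪ψ, g⟫_𝕜‖ ^ 2 ≤ (‖ψ - p‖ * ‖g‖) ^ 2 := by
        rw [hinner]; gcongr; exact norm_inner_le_norm _ _
    _ = (‖ψ‖ ^ 2 - ‖⟪ψ, χ⟫_𝕜‖ ^ 2 / ‖χ‖ ^ 2) * ‖g‖ ^ 2 := by rw [← hpnorm, hpyth]; ring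

theorem norm_add_smul_sq_le {χ g ψ : E} (hg : ⟪χ, g⟫_𝕜 = 0) (hψχ : ⟪ψ, χ⟫_𝕜 ≠ 0) (c : 𝕜)
    {ε : ℝ} (hε : 0 < ε) :
    ‖g + c • χ‖ ^ 2 ≤ (1 + ε) * (‖χ‖ ^ 2 * ‖ψ‖ ^ 2 / ‖⟪ψ, χ⟫_𝕜‖ ^ 2) * ‖g‖ ^ 2
      + (1 + ε) / ε * (‖χ‖ ^ 2 / ‖⟪ψ, χ⟫_𝕜‖ ^ 2) * ‖⟪ψ, g + c • χ⟫_𝕜‖ ^ 2 := by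
  have hχ : χ ≠ 0 := by rintro rfl; simp at hψχ
  set P := ‖⟪ψ, χ⟫_𝕜‖
  set B := ‖⟪ψ, g + c • χ⟫_𝕜‖
  set R := ‖⟪ψ, g⟫_𝕜‖
  have hP : 0 < P := norm_pos_iff.mpr hψχ
  have hX : 0 < ‖χ‖ ^ 2 := by positivity [hχ]
  have hpyth : ‖g + c • χ‖ ^ 2 = ‖g‖ ^ 2 + ‖c‖ ^ 2 * ‖χ‖ ^ 2 := by
    have hgχ : ⟪g, c • χ⟫_𝕜 = 0 := by rw [inner_smul_right, inner_eq_zero_symm.mp hg, mul_zero]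
    simpa only [sq, norm_smul, mul_mul_mul_comm] using
      norm_add_sq_eq_norm_sq_add_norm_sq_of_inner_eq_zero g (c • χ) hgχ
  have hc : ‖c‖ * P ≤ B + R := by
    have : c * ⟪ψ, χ⟫_𝕜 = ⟪ψ, g + c • χ⟫_𝕜 - ⟪ψ, g⟫_𝕜 := by
      rw [inner_add_right, inner_smul_right]; ring
    calc ‖c‖ * P = ‖c * ⟪ψ, χ⟫_𝕜‖ := (norm_mul _ _).symm
      _ ≤ B + R := this ▸ norm_sub_le _ _
  have hyoung : (B + R) ^ 2 ≤ (1 + ε) / ε * B ^ 2 + (1 + ε) * R ^ 2 := by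
    have h : 0 ≤ (B - ε * R) ^ 2 / ε := by positivity
    have e : (1 + ε) / ε * B ^ 2 + (1 + ε) * R ^ 2 - (B + R) ^ 2 = (B - ε * R) ^ 2 / ε := by
      field_simp; ring
    linarith
  have hcs := norm_inner_sq_le_of_inner_eq_zero hχ hg ψ
  have hcP : ‖c‖ ^ 2 * P ^ 2
      ≤ (1 + ε) / ε * B ^ 2 + (1 + ε) * ((‖ψ‖ ^ 2 - P ^ 2 / ‖χ‖ ^ 2) * ‖g‖ ^ 2) := by
    calc ‖c‖ ^ 2 * P ^ 2 = (‖c‖ * P) ^ 2 := by ring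
      _ ≤ (B + R) ^ 2 := by gcongr
      _ ≤ _ := hyoung.trans (by gcongr)
  have hcχ : ‖c‖ ^ 2 * ‖χ‖ ^ 2 ≤ (1 + ε) / ε * (‖χ‖ ^ 2 / P ^ 2) * B ^ 2
      + (1 + ε) * (‖χ‖ ^ 2 * ‖ψ‖ ^ 2 / P ^ 2) * ‖g‖ ^ 2 - (1 + ε) * ‖g‖ ^ 2 := by
    calc ‖c‖ ^ 2 * ‖χ‖ ^ 2 = ‖χ‖ ^ 2 / P ^ 2 * (‖c‖ ^ 2 * P ^ 2) := by field_simp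
      _ ≤ ‖χ‖ ^ 2 / P ^ 2 * ((1 + ε) / ε * B ^ 2
          + (1 + ε) * ((‖ψ‖ ^ 2 - P ^ 2 / ‖χ‖ ^ 2) * ‖g‖ ^ 2)) := by gcongr
      _ = _ := by field_simp; ring
  have hg2 : 0 ≤ ε * ‖g‖ ^ 2 := by positivity
  rw [hpyth]
  linarith

theorem LinearMap.IsSymmetric.norm_sq_le_of_ker_eq_span [FiniteDimensional 𝕜 E]
    {T : E →ₗ[𝕜] E} (hT : T.IsSymmetric) {χ ψ : E} (hker : LinearMap.ker T = 𝕜 ∙ χ)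
    (hψχ : ⟪ψ, χ⟫_𝕜 ≠ 0) {lam : ℝ} (hlam0 : 0 < lam)
    (hlam : ∀ μ : ℝ, μ ≠ 0 → HasEigenvalue T μ → lam ≤ μ) (f : E) {ε : ℝ} (hε : 0 < ε) :
    ‖f‖ ^ 2 ≤ (1 + ε) * (‖χ‖ ^ 2 * ‖ψ‖ ^ 2 / ‖⟪ψ, χ⟫_𝕜‖ ^ 2 / lam) * RCLike.re ⟪f, T f⟫_𝕜
      + (1 + ε) / ε * (‖χ‖ ^ 2 / ‖⟪ψ, χ⟫_𝕜‖ ^ 2) * ‖⟪ψ, f⟫_𝕜‖ ^ 2 := by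
  have hχ : ⟪χ, χ⟫_𝕜 ≠ 0 := by
    rw [inner_self_ne_zero]; rintro rfl; simp at hψχ
  set c := ⟪χ, f⟫_𝕜 / ⟪χ, χ⟫_𝕜
  set g := f - c • χ
  have hfg : f = g + c • χ := (sub_add_cancel f _).symm
  have hg : ⟪χ, g⟫_𝕜 = 0 := by
    rw [inner_sub_right, inner_smul_right, div_mul_cancel₀ _ hχ, sub_self]
  have hgker : ∀ y ∈ LinearMap.ker T, ⟪y, g⟫_𝕜 = 0 := by
    intro y hy
    obtain ⟨a, rfl⟩ := Submodule.mem_span_singleton.mp (hker ▸ hy)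
    rw [inner_smul_left, hg, mul_zero]
  have hTχ : T (c • χ) = 0 := by
    rw [← LinearMap.mem_ker, hker]
    exact Submodule.smul_mem _ _ (Submodule.mem_span_singleton_self χ)
  have hquad : ⟪f, T f⟫_𝕜 = ⟪g, T g⟫_𝕜 := by
    rw [hfg, map_add, hTχ, add_zero, inner_add_left, ← hT (c • χ), hTχ, inner_zero_left,
      add_zero]
  have hpoinc : ‖g‖ ^ 2 ≤ RCLike.re ⟪f, T f⟫_𝕜 / lam := by
    rw [hquad, le_div_iff₀ hlam0, mul_comm]
    exact hT.mul_norm_sq_le_re_inner_map_self hlam hgker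
  calc ‖f‖ ^ 2 ≤ (1 + ε) * (‖χ‖ ^ 2 * ‖ψ‖ ^ 2 / ‖⟪ψ, χ⟫_𝕜‖ ^ 2) * ‖g‖ ^ 2
        + (1 + ε) / ε * (‖χ‖ ^ 2 / ‖⟪ψ, χ⟫_𝕜‖ ^ 2) * ‖⟪ψ, f⟫_𝕜‖ ^ 2 := by
        rw [hfg]; exact norm_add_smul_sq_le hg hψχ c hε
    _ ≤ (1 + ε) * (‖χ‖ ^ 2 * ‖ψ‖ ^ 2 / ‖⟪ψ, χ⟫_𝕜‖ ^ 2) * (RCLike.re ⟪f, T f⟫_𝕜 / lam)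
        + (1 + ε) / ε * (‖χ‖ ^ 2 / ‖⟪ψ, χ⟫_𝕜‖ ^ 2) * ‖⟪ψ, f⟫_𝕜‖ ^ 2 := by gcongr
    _ = _ := by ring

end InnerProductSpace

theorem SimpleGraph.Connected.apply_eq_of_forall_adj {V α : Type*} {G : SimpleGraph V}
    (hG : G.Connected) {e : V → α} (h : ∀ u v, G.Adj u v → e u = e v) (u v : V) :
    e u = e v := by
  obtain ⟨p⟩ := hG.preconnected u v
  induction p with
  | nil => rfl
  | cons hadj _ ih => exact (h _ _ hadj).trans ih

section WeightedGraph

variable {V : Type*} [Fintype V] (w : V → V → ℝ)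

noncomputable def lapLin : EuclideanSpace ℂ V →ₗ[ℂ] EuclideanSpace ℂ V where
  toFun f := WithLp.toLp 2 (lap w f)
  map_add' f g := by
    ext v
    simp only [lap, PiLp.add_apply, ← sum_add_distrib]
    exact sum_congr rfl fun u _ => by ring
  map_smul' c f := by
    ext v
    simp only [lap, PiLp.smul_apply, smul_eq_mul, RingHom.id_apply, mul_sum]
    exact sum_congr rfl fun u _ => by ring

theorem gip_eq_inner (f g : V → ℂ) : gip f g = ⟪WithLp.toLp 2 g, WithLp.toLp 2 f⟫_ℂ := by
  simp [gip, PiLp.inner_apply]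

theorem normSq_eq_norm_sq (f : V → ℂ) : normSq f = ‖WithLp.toLp 2 f‖ ^ 2 := by
  simp [normSq, EuclideanSpace.norm_sq_eq]

variable {w}

theorem gip_lap (hsym : ∀ u v, w u v = w v u) (f g : V → ℂ) :
    gip (lap w f) g
      = 2⁻¹ * ∑ u, ∑ v, (f u - f v) * starRingEnd ℂ (g u - g v) * (w u v : ℂ) := by
  have hswap : ∑ u, ∑ v, (f u - f v) * starRingEnd ℂ (g v) * (w u v : ℂ)
      = - ∑ u, ∑ v, (f u - f v) * starRingEnd ℂ (g u) * (w u v : ℂ) := by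
    rw [sum_comm, ← sum_neg_distrib]
    refine sum_congr rfl fun u _ => ?_
    rw [← sum_neg_distrib]
    refine sum_congr rfl fun v _ => ?_
    rw [hsym v u]
    ring
  have hsplit : ∑ u, ∑ v, (f u - f v) * starRingEnd ℂ (g u - g v) * (w u v : ℂ)
      = ∑ u, ∑ v, (f u - f v) * starRingEnd ℂ (g u) * (w u v : ℂ)
        - ∑ u, ∑ v, (f u - f v) * starRingEnd ℂ (g v) * (w u v : ℂ) := by
    simp only [map_sub, ← sum_sub_distrib]
    exact sum_congr rfl fun u _ => sum_congr rfl fun v _ => by ring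
  rw [hsplit, hswap, sub_neg_eq_add, ← two_mul, inv_mul_cancel_left₀ two_ne_zero]
  simp only [gip, lap, sum_mul]
  exact sum_congr rfl fun u _ => sum_congr rfl fun v _ => by ring

theorem lapLin_isSymmetric (hsym : ∀ u v, w u v = w v u) : (lapLin (V := V) w).IsSymmetric := by
  intro f g
  change ⟪WithLp.toLp 2 (lap w f), g⟫_ℂ = ⟪f, WithLp.toLp 2 (lap w g)⟫_ℂ
  rw [← inner_conj_symm, ← gip_eq_inner, ← gip_eq_inner, gip_lap hsym, gip_lap hsym]
  simp only [map_mul, map_sum, map_sub, map_inv₀, map_ofNat, Complex.conj_conj,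
    Complex.conj_ofReal]
  congr 1
  exact sum_congr rfl fun u _ => sum_congr rfl fun v _ => by ring

theorem inner_lapLin_self (hsym : ∀ u v, w u v = w v u) (f : EuclideanSpace ℂ V) :
    ⟪f, lapLin w f⟫_ℂ = gradSq w f := by
  change ⟪f, WithLp.toLp 2 (lap w f)⟫_ℂ = _
  rw [← gip_eq_inner, gip_lap hsym, gradSq]
  push_cast
  simp only [mul_sum, Complex.mul_conj, Complex.normSq_eq_norm_sq]
  push_cast
  exact sum_congr rfl fun u _ => sum_congr rfl fun v _ => by ring

theorem gradSq_nonneg (hnn : ∀ u v, 0 ≤ w u v) (f : V → ℂ) : 0 ≤ gradSq w f :=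
  mul_nonneg (by norm_num) (sum_nonneg fun u _ => sum_nonneg fun v _ =>
    mul_nonneg (sq_nonneg _) (hnn u v))

theorem eq_of_gradSq_eq_zero (hnn : ∀ u v, 0 ≤ w u v) {f : V → ℂ} (hf : gradSq w f = 0)
    {u v : V} (huv : w u v ≠ 0) : f u = f v := by
  have hterm_nonneg : ∀ u v, 0 ≤ ‖f u - f v‖ ^ 2 * w u v := fun u v =>
    mul_nonneg (sq_nonneg _) (hnn u v)
  have hsum : ∑ u, ∑ v, ‖f u - f v‖ ^ 2 * w u v = 0 := by
    simpa [gradSq] using hf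
  have hterm : ‖f u - f v‖ ^ 2 * w u v = 0 :=
    (sum_eq_zero_iff_of_nonneg fun v _ => hterm_nonneg u v).mp
      ((sum_eq_zero_iff_of_nonneg fun u _ => sum_nonneg fun v _ => hterm_nonneg u v).mp
        hsum u (mem_univ u)) v (mem_univ v)
  simpa [sub_eq_zero, huv] using hterm

theorem ker_lapLin (hsym : ∀ u v, w u v = w v u) (hnn : ∀ u v, 0 ≤ w u v)
    (hconn : (SimpleGraph.fromRel fun u v : V => w u v ≠ 0).Connected) :
    LinearMap.ker (lapLin w) = ℂ ∙ WithLp.toLp 2 (fun _ : V => (1 : ℂ)) := by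
  apply le_antisymm
  · intro f hf
    have hgrad : gradSq w f = 0 := by
      have h := inner_lapLin_self hsym f
      rw [LinearMap.mem_ker.mp hf, inner_zero_right] at h
      exact_mod_cast h.symm
    have hconst : ∀ u v, f u = f v := hconn.apply_eq_of_forall_adj fun u v huv => by
      rcases (SimpleGraph.fromRel_adj _ u v).mp huv |>.2 with h | h
      · exact eq_of_gradSq_eq_zero hnn hgrad h
      · exact (eq_of_gradSq_eq_zero hnn hgrad h).symm
    obtain ⟨v₀⟩ := hconn.nonempty
    refine Submodule.mem_span_singleton.mpr ⟨f v₀, ?_⟩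
    ext v
    simp [hconst v v₀]
  · rw [Submodule.span_singleton_le_iff_mem, LinearMap.mem_ker]
    ext v
    simp [lapLin, lap]

theorem isEigen_iff_exists_hasEigenvector (μ : ℝ) :
    IsEigen w μ ↔ ∃ f, HasEigenvector (lapLin w) μ f := by
  constructor
  · rintro ⟨g, hg0, hg⟩
    refine ⟨WithLp.toLp 2 g, mem_eigenspace_iff.mpr ?_, fun h => hg0 (congrArg WithLp.ofLp h)⟩
    ext v
    exact congrFun hg v
  · rintro ⟨f, hf, hf0⟩
    exact ⟨f.ofLp, fun h => hf0 (congrArg (WithLp.toLp 2) h),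
      funext fun v => congrArg (· v) (mem_eigenspace_iff.mp hf)⟩

theorem IsEigen.nonneg (hsym : ∀ u v, w u v = w v u) (hnn : ∀ u v, 0 ≤ w u v) {μ : ℝ}
    (h : IsEigen w μ) : 0 ≤ μ := by
  obtain ⟨f, hf⟩ := (isEigen_iff_exists_hasEigenvector μ).mp h
  refine hf.nonneg fun x => ?_
  rw [inner_lapLin_self hsym, RCLike.re_to_complex, Complex.ofReal_re]
  exact gradSq_nonneg hnn x

end WeightedGraph

theorem poincare_with_functional_eps_general
    {V : Type*} [Fintype V] (w : V → V → ℝ)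
    (hsym : ∀ u v, w u v = w v u) (hnn : ∀ u v, 0 ≤ w u v)
    (hconn : (SimpleGraph.fromRel fun u v : V => w u v ≠ 0).Connected)
    (lam1 : ℝ) (hlam : IsLeast {μ : ℝ | μ ≠ 0 ∧ IsEigen w μ} lam1)
    (ψ : V → ℂ) (hψ : gip (fun _ => 1) ψ ≠ 0)
    (f : V → ℂ) (ε : ℝ) (hε : 0 < ε) :
    normSq f ≤
      (1 + ε) * (((Fintype.card V : ℝ) * normSq ψ / ‖gip (fun _ => (1 : ℂ)) ψ‖ ^ 2) / lam1)
          * gradSq w f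
        + ((1 + ε) / ε) * ((Fintype.card V : ℝ) ^ 2 / ‖gip (fun _ => (1 : ℂ)) ψ‖ ^ 2)
          * ‖gip f ψ‖ ^ 2 := by
  have hlam0 : 0 < lam1 := (hlam.1.2.nonneg hsym hnn).lt_of_ne' hlam.1.1
  have hlam_le (μ : ℝ) (hμ : μ ≠ 0) (h : HasEigenvalue (lapLin w) μ) : lam1 ≤ μ :=
    hlam.2 ⟨hμ, (isEigen_iff_exists_hasEigenvector μ).mpr h.exists_hasEigenvector⟩
  have hχ : ‖WithLp.toLp 2 (fun _ : V => (1 : ℂ))‖ ^ 2 = Fintype.card V := by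
    simp [← normSq_eq_norm_sq, normSq]
  have hn : (1 : ℝ) ≤ Fintype.card V := by
    have := hconn.nonempty
    exact_mod_cast Fintype.card_pos
  rw [gip_eq_inner] at hψ
  have key := (lapLin_isSymmetric hsym).norm_sq_le_of_ker_eq_span (ker_lapLin hsym hnn hconn) hψ
    hlam0 hlam_le (WithLp.toLp 2 f) hε
  rw [inner_lapLin_self hsym, RCLike.re_to_complex, Complex.ofReal_re, hχ,
    ← normSq_eq_norm_sq, ← normSq_eq_norm_sq, ← gip_eq_inner, ← gip_eq_inner] at key
  refine key.trans ?_
  gcongr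
  nlinarith

theorem poincare_with_functional_eps
    {V : Type*} [Fintype V] (w : V → V → ℝ)
    (hsym : ∀ u v, w u v = w v u) (hnn : ∀ u v, 0 ≤ w u v)
    (hdiag : ∀ v, w v v = 0)
    (hconn : (SimpleGraph.fromRel fun u v : V => w u v ≠ 0).Connected)
    (hcard : 1 < Fintype.card V)
    (lam1 : ℝ) (hlam : IsLeast {μ : ℝ | μ ≠ 0 ∧ IsEigen w μ} lam1)
    (ψ : V → ℂ) (hψ : gip (fun _ => 1) ψ ≠ 0)
    (f : V → ℂ) (ε : ℝ) (hε : 0 < ε) :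
    normSq f ≤
      (1 + ε) * (((Fintype.card V : ℝ) * normSq ψ / ‖gip (fun _ => (1 : ℂ)) ψ‖ ^ 2) / lam1)
          * gradSq w f
        + ((1 + ε) / ε) * ((Fintype.card V : ℝ) ^ 2 / ‖gip (fun _ => (1 : ℂ)) ψ‖ ^ 2)
          * ‖gip f ψ‖ ^ 2 :=
  poincare_with_functional_eps_general w hsym hnn hconn lam1 hlam ψ hψ f ε hε
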